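/- arXiv:1310.7449 — 5 statements merged into one kernel-verified Lean document; each statement's English description precedes it below -/
import Mathlib

section
/- Flashbacks are preserved by mutation application: let μ be a mutation and suppose ⟨(x₁,...,xₙ), V⟩ →μ ⟨(x₁',...,xₙ'), V'⟩ →μ^m ⟨(y₁,...,yₙ), V''⟩ →μ ⟨(y₁',...,yₙ'), V'''⟩. If there is a V''-flashback ρ with ρ(yᵢ) = xᵢ for all i, then the relation ρ' defined by ρ'(yᵢ') = xᵢ' is a well-defined injective function and is a V'''-flashback from (y₁',...,yₙ') to (x₁',...,xₙ'). -/
/-- A partial order of names: a carrier set of names together with a relation. -/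
structure NamePO (α : Type) where
  dom : Set α
  rel : α → α → Prop

/-- `V` is a genuine partial order on its set of names. -/
def IsPO {α : Type} (V : NamePO α) : Prop :=
  (∀ x ∈ V.dom, V.rel x x) ∧
  (∀ x y, V.rel x y → V.rel y x → x = y) ∧
  (∀ x y z, V.rel x y → V.rel y z → V.rel x z) ∧
  (∀ x y, V.rel x y → x ∈ V.dom ∧ y ∈ V.dom)

/-- `V ⊕ X < Z`: extension of `V` where the fresh names `Z` become maximal
above everything above some name of `X`. -/
def extendPO {α : Type} (V : NamePO α) (X Z : Set α) : NamePO α where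
  dom := V.dom ∪ Z
  rel := fun a b =>
    V.rel a b ∨ (a ∈ Z ∧ a = b) ∨
      (b ∈ Z ∧ ∃ x ∈ X, ∃ y, V.rel x y ∧ V.rel a y)

/-- A `V`-flashback: a renaming injective on the names of `V` with `ρ x ≤ x`. -/
def IsFlashback {α : Type} (V : NamePO α) (ρ : α → α) : Prop :=
  (∀ x ∈ V.dom, ∀ y ∈ V.dom, ρ x = ρ y → x = y) ∧
  (∀ x ∈ V.dom, V.rel (ρ x) x)

/-- One application of the mutation `μ` to a tuple with its partial order:
entries `μ i < n` copy old names, entries `μ i ≥ n` are pairwise-distinct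
fresh names, and the order is extended making fresh names maximal. -/
def MutStep {α : Type} {n : ℕ} (μ : Fin n → Fin (2*n)) :
    ((Fin n → α) × NamePO α) → ((Fin n → α) × NamePO α) → Prop :=
  fun s t => ∃ z : Fin (2*n) → α,
    (∀ c : Fin (2*n), n ≤ (c : ℕ) → z c ∉ s.2.dom) ∧
    (∀ c c' : Fin (2*n), n ≤ (c : ℕ) → n ≤ (c' : ℕ) → z c = z c' → c = c') ∧
    (∀ i, t.1 i = if h : (μ i : ℕ) < n then s.1 ⟨(μ i : ℕ), h⟩ else z (μ i)) ∧
    t.2 = extendPO s.2 (Set.range s.1)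
        {a | ∃ c : Fin (2*n), n ≤ (c : ℕ) ∧ (∃ i, μ i = c) ∧ a = z c}

/-- `m`-fold application of the mutation `μ`. -/
def MutSteps {α : Type} {n : ℕ} (μ : Fin n → Fin (2*n)) :
    ℕ → ((Fin n → α) × NamePO α) → ((Fin n → α) × NamePO α) → Prop
  | 0 => fun s t => t = s
  | m+1 => fun s t => ∃ u, MutStep μ s u ∧ MutSteps μ m u t

/-! ### Auxiliary lemmas -/

lemma extend_isPO {α : Type} {V : NamePO α} (hV : IsPO V) (X Z : Set α)
    (hZ : ∀ a ∈ Z, a ∉ V.dom) : IsPO (extendPO V X Z) := by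
  obtain ⟨hrefl, hanti, htrans, hdom⟩ := hV
  refine ⟨?_, ?_, ?_, ?_⟩
  · rintro a (ha | ha)
    · exact Or.inl (hrefl a ha)
    · exact Or.inr (Or.inl ⟨ha, rfl⟩)
  · rintro a b (hab | ⟨haZ, rfl⟩ | ⟨hbZ, xx, hx, tt, hxt, hat⟩) hba
    · rcases hba with hba | ⟨hbZ, rfl⟩ | ⟨haZ, xx, hx, tt, hxt, hbt⟩
      · exact hanti a b hab hba
      · rfl
      · exact absurd (hdom a b hab).1 (hZ a haZ)
    · rfl
    · rcases hba with hba | ⟨hbZ', rfl⟩ | ⟨haZ, xx', hx', tt', hxt', hbt'⟩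
      · exact absurd (hdom b a hba).1 (hZ b hbZ)
      · rfl
      · exact absurd (hdom b tt' hbt').1 (hZ b hbZ)
  · rintro a b c (hab | ⟨haZ, rfl⟩ | ⟨hbZ, xx, hx, tt, hxt, hat⟩) hbc
    · rcases hbc with hbc | ⟨hbZ, rfl⟩ | ⟨hcZ, xx, hx, tt, hxt, hbt⟩
      · exact Or.inl (htrans a b c hab hbc)
      · exact absurd (hdom a b hab).2 (hZ b hbZ)
      · exact Or.inr (Or.inr ⟨hcZ, xx, hx, tt, hxt, htrans a b tt hab hbt⟩)
    · exact hbc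
    · rcases hbc with hbc | ⟨hbZ', rfl⟩ | ⟨hcZ, xx', hx', tt', hxt', hbt'⟩
      · exact absurd (hdom b c hbc).1 (hZ b hbZ)
      · exact Or.inr (Or.inr ⟨hbZ, xx, hx, tt, hxt, hat⟩)
      · exact absurd (hdom b tt' hbt').1 (hZ b hbZ)
  · rintro a b (hab | ⟨haZ, rfl⟩ | ⟨hbZ, xx, hx, tt, hxt, hat⟩)
    · exact ⟨Or.inl (hdom a b hab).1, Or.inl (hdom a b hab).2⟩
    · exact ⟨Or.inr haZ, Or.inr haZ⟩
    · exact ⟨Or.inl (hdom a tt hat).1, Or.inr hbZ⟩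

lemma mutStep_mono {α : Type} {n : ℕ} {μ : Fin n → Fin (2*n)}
    {s t : (Fin n → α) × NamePO α} (h : MutStep μ s t) :
    (∀ a ∈ s.2.dom, a ∈ t.2.dom) ∧ (∀ a b, s.2.rel a b → t.2.rel a b) := by
  obtain ⟨z, hz1, hz2, hz3, hz4⟩ := h
  rw [hz4]
  exact ⟨fun a ha => Or.inl ha, fun a b h => Or.inl h⟩

lemma mutStep_inv {α : Type} {n : ℕ} {μ : Fin n → Fin (2*n)}
    {s t : (Fin n → α) × NamePO α} (h : MutStep μ s t)
    (hPO : IsPO s.2) (hd : ∀ i, s.1 i ∈ s.2.dom) :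
    IsPO t.2 ∧ (∀ i, t.1 i ∈ t.2.dom) := by
  obtain ⟨z, hz1, hz2, hz3, hz4⟩ := h
  constructor
  · rw [hz4]
    exact extend_isPO hPO _ _ (by rintro a ⟨c, hc, _, rfl⟩; exact hz1 c hc)
  · intro i
    rw [hz3 i, hz4]
    by_cases h : (μ i : ℕ) < n
    · rw [dif_pos h]; exact Or.inl (hd _)
    · rw [dif_neg h]; exact Or.inr ⟨μ i, Nat.le_of_not_lt h, ⟨i, rfl⟩, rfl⟩

lemma mutSteps_inv {α : Type} {n : ℕ} {μ : Fin n → Fin (2*n)} (m : ℕ) :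
    ∀ s t : (Fin n → α) × NamePO α, MutSteps μ m s t → IsPO s.2 →
      (∀ i, s.1 i ∈ s.2.dom) →
    IsPO t.2 ∧ (∀ i, t.1 i ∈ t.2.dom) ∧
      (∀ a ∈ s.2.dom, a ∈ t.2.dom) ∧ (∀ a b, s.2.rel a b → t.2.rel a b) := by
  induction m with
  | zero =>
    intro s t h hPO hd
    obtain rfl : t = s := h
    exact ⟨hPO, hd, fun _ h => h, fun _ _ h => h⟩
  | succ m ih =>
    intro s t h hPO hd
    obtain ⟨u, h1, h2⟩ := h
    obtain ⟨hPO', hd'⟩ := mutStep_inv h1 hPO hd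
    obtain ⟨A, B, C, D⟩ := ih u t h2 hPO' hd'
    exact ⟨A, B, fun a ha => C a ((mutStep_mono h1).1 a ha),
      fun a b hab => D a b ((mutStep_mono h1).2 a b hab)⟩

lemma mutSteps_chain {α : Type} {n : ℕ} {μ : Fin n → Fin (2*n)} (m : ℕ) :
    ∀ s t : (Fin n → α) × NamePO α, MutSteps μ m s t → IsPO s.2 →
      (∀ i, s.1 i ∈ s.2.dom) → ∀ i : Fin n, n ≤ (μ i : ℕ) →
      t.2.rel (s.1 i) (t.1 i) := by
  induction m with
  | zero =>
    intro s t h hPO hd i hi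
    obtain rfl : t = s := h
    exact hPO.1 _ (hd i)
  | succ m ih =>
    intro s t h hPO hd i hi
    obtain ⟨u, h1, h2⟩ := h
    obtain ⟨hPO', hd'⟩ := mutStep_inv h1 hPO hd
    have step : u.2.rel (s.1 i) (u.1 i) := by
      obtain ⟨z, hz1, hz2, hz3, hz4⟩ := h1
      rw [hz3 i, hz4, dif_neg (Nat.not_lt.2 hi)]
      exact Or.inr (Or.inr ⟨⟨μ i, hi, ⟨i, rfl⟩, rfl⟩, s.1 i, ⟨i, rfl⟩, s.1 i,
        hPO.1 _ (hd i), hPO.1 _ (hd i)⟩)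
    obtain ⟨tPO, _, _, relmono⟩ := mutSteps_inv m u t h2 hPO' hd'
    exact tPO.2.2.1 _ _ _ (relmono _ _ step) (ih u t h2 hPO' hd' i hi)

lemma mutSteps_fresh {α : Type} {n : ℕ} {μ : Fin n → Fin (2*n)} (D : Set α) (m : ℕ) :
    ∀ s t : (Fin n → α) × NamePO α, MutSteps μ m s t →
      (∀ a ∈ D, a ∈ s.2.dom) →
      (∀ i : Fin n, n ≤ (μ i : ℕ) → s.1 i ∉ D) →
      ∀ i : Fin n, n ≤ (μ i : ℕ) → t.1 i ∉ D := by
  induction m with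
  | zero =>
    intro s t h hD hs
    obtain rfl : t = s := h
    exact hs
  | succ m ih =>
    intro s t h hD hs
    obtain ⟨u, h1, h2⟩ := h
    obtain ⟨z, hz1, hz2, hz3, hz4⟩ := h1
    apply ih u t h2
    · intro a ha; rw [hz4]; exact Or.inl (hD a ha)
    · intro i hi
      rw [hz3 i, dif_neg (Nat.not_lt.2 hi)]
      intro hmem
      exact hz1 (μ i) hi (hD _ hmem)

noncomputable def tauSeq {P : ℕ → Prop} (h : ∀ N : ℕ, ∃ k, N ≤ k ∧ P k) : ℕ → ℕ
  | 0 => (h 1).choose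
  | j+1 => (h (tauSeq h j + 1)).choose

lemma tauSeq_spec {P : ℕ → Prop} (h : ∀ N : ℕ, ∃ k, N ≤ k ∧ P k) (j : ℕ) :
    P (tauSeq h j) := by
  cases j with
  | zero => exact (h 1).choose_spec.2
  | succ j => exact (h (tauSeq h j + 1)).choose_spec.2

lemma tauSeq_strictMono {P : ℕ → Prop} (h : ∀ N : ℕ, ∃ k, N ≤ k ∧ P k) :
    StrictMono (tauSeq h) := by
  apply strictMono_nat_of_lt_succ
  intro j
  exact Nat.lt_of_succ_le (h (tauSeq h j + 1)).choose_spec.1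

lemma tauSeq_ge_one {P : ℕ → Prop} (h : ∀ N : ℕ, ∃ k, N ≤ k ∧ P k) (j : ℕ) :
    1 ≤ tauSeq h j := by
  cases j with
  | zero => exact (h 1).choose_spec.1
  | succ j => exact le_trans (Nat.le_add_left 1 _) (h (tauSeq h j + 1)).choose_spec.1

def orb {α : Type} (ρ : α → α) (a : α) : ℕ → α
  | 0 => a
  | k+1 => ρ (orb ρ a k)

def BadPt {α : Type} {n : ℕ} (μ : Fin n → Fin (2*n)) (V'' : NamePO α)
    (ρ : α → α) (z : Fin (2*n) → α) (a : α) : Prop :=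
  a ∈ V''.dom ∧ ∃ c : Fin (2*n), n ≤ (c:ℕ) ∧ (∃ i, μ i = c) ∧ ρ a = z c

open Classical in
noncomputable def sigmaF {α : Type} {n : ℕ} (μ : Fin n → Fin (2*n)) (V'' : NamePO α)
    (ρ : α → α) (z : Fin (2*n) → α) (t : ℕ → α) (a : α) : α :=
  if h : BadPt μ V'' ρ z a then t (2 * ((h.2.choose : Fin (2*n)) : ℕ))
  else if h2 : ∃ j, a = t j then t (2 * h2.choose + 1)
  else a

open Classical in
noncomputable def rhoF {α : Type} {n : ℕ} (μ : Fin n → Fin (2*n)) (V'' : NamePO α)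
    (ρ : α → α) (z w : Fin (2*n) → α) (t : ℕ → α) (a : α) : α :=
  if h : ∃ c : Fin (2*n), n ≤ (c:ℕ) ∧ (∃ i, μ i = c) ∧ a = w c
  then z h.choose else ρ (sigmaF μ V'' ρ z t a)

/-- Flashbacks are preserved by mutation application: if
`⟨x,V⟩ →μ ⟨x',V'⟩ →μ^m ⟨y,V''⟩ →μ ⟨y',V'''⟩` and `ρ` is a `V''`-flashback
with `ρ (y i) = x i`, then there is a `V'''`-flashback `ρ'` with
`ρ' (y' i) = x' i`. -/
theorem stmt7 {α : Type} {n : ℕ} (μ : Fin n → Fin (2*n)) (m : ℕ)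
    (x x' y y' : Fin n → α) (V V' V'' V''' : NamePO α)
    (hV : IsPO V) (hx : ∀ i, x i ∈ V.dom)
    (h1 : MutStep μ (x, V) (x', V'))
    (h2 : MutSteps μ m (x', V') (y, V''))
    (h3 : MutStep μ (y, V'') (y', V'''))
    (ρ : α → α) (hρ : IsFlashback V'' ρ) (hxy : ∀ i, ρ (y i) = x i) :
    ∃ ρ' : α → α, IsFlashback V''' ρ' ∧ ∀ i, ρ' (y' i) = x' i := by
  classical
  obtain ⟨hρinj, hρdef⟩ := hρ
  obtain ⟨z, hz1, hz2, hz3, hz4⟩ := h1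
  obtain ⟨w, hw1, hw2, hw3, hw4⟩ := h3
  have hz3' : ∀ i, x' i = if h : ((μ i : ℕ) < n) then x ⟨(μ i : ℕ), h⟩ else z (μ i) := hz3
  have hz4' : V' = extendPO V (Set.range x)
      {a | ∃ c : Fin (2*n), n ≤ (c : ℕ) ∧ (∃ i, μ i = c) ∧ a = z c} := hz4
  have hz1' : ∀ c : Fin (2*n), n ≤ (c : ℕ) → z c ∉ V.dom := hz1
  have hw3' : ∀ i, y' i = if h : ((μ i : ℕ) < n) then y ⟨(μ i : ℕ), h⟩ else w (μ i) := hw3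
  have hw4' : V''' = extendPO V'' (Set.range y)
      {a | ∃ c : Fin (2*n), n ≤ (c : ℕ) ∧ (∃ i, μ i = c) ∧ a = w c} := hw4
  have hw1' : ∀ c : Fin (2*n), n ≤ (c : ℕ) → w c ∉ V''.dom := hw1
  have inv1 := mutStep_inv (s := (x, V)) (t := (x', V')) ⟨z, hz1, hz2, hz3, hz4⟩ hV hx
  have hV'PO : IsPO V' := inv1.1
  have hx'd : ∀ i, x' i ∈ V'.dom := inv1.2
  have inv2 := mutSteps_inv m (x', V') (y, V'') h2 hV'PO hx'd
  have hV''PO : IsPO V'' := inv2.1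
  have hyd : ∀ i, y i ∈ V''.dom := inv2.2.1
  have hmono12 : ∀ a ∈ V'.dom, a ∈ V''.dom := inv2.2.2.1
  have hrel12 : ∀ a b, V'.rel a b → V''.rel a b := inv2.2.2.2
  obtain ⟨hrefl'', hanti'', htrans'', hdomcl''⟩ := hV''PO
  -- basic facts about the fresh names z
  have zdom'' : ∀ c : Fin (2*n), n ≤ (c : ℕ) → (∃ i, μ i = c) → z c ∈ V''.dom := by
    intro c hc hhit
    apply hmono12
    rw [hz4']
    exact Or.inr ⟨c, hc, hhit, rfl⟩
  have xlez : ∀ k, ∀ c : Fin (2*n), n ≤ (c : ℕ) → (∃ i, μ i = c) → V''.rel (x k) (z c) := by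
    intro k c hc hhit
    apply hrel12
    rw [hz4']
    exact Or.inr (Or.inr ⟨⟨c, hc, hhit, rfl⟩, x k, ⟨k, rfl⟩, x k, hV.1 _ (hx k), hV.1 _ (hx k)⟩)
  have chainz : ∀ i : Fin n, n ≤ (μ i : ℕ) → V''.rel (z (μ i)) (y i) := by
    intro i hi
    have hch := mutSteps_chain m (x', V') (y, V'') h2 hV'PO hx'd i hi
    have : V''.rel (x' i) (y i) := hch
    rwa [hz3' i, dif_neg (Nat.not_lt.2 hi)] at this
  have freshy : ∀ i : Fin n, n ≤ (μ i : ℕ) → y i ∉ V.dom := by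
    apply mutSteps_fresh V.dom m (x', V') (y, V'') h2
    · intro a ha; rw [hz4']; exact Or.inl ha
    · intro i hi
      show x' i ∉ V.dom
      rw [hz3' i, dif_neg (Nat.not_lt.2 hi)]
      exact hz1' (μ i) hi
  -- decomposition of the domain of V'''
  have hdom''' : ∀ a ∈ V'''.dom,
      a ∈ V''.dom ∨ ∃ c : Fin (2*n), n ≤ (c : ℕ) ∧ (∃ i, μ i = c) ∧ a = w c := by
    intro a ha
    rw [hw4'] at ha
    rcases ha with ha | ha
    · exact Or.inl ha
    · exact Or.inr ha
  by_cases hex : ∃ i : Fin n, n ≤ (μ i : ℕ)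
  · obtain ⟨i0, hi0⟩ := hex
    -- the descending orbit o 0 = y i0, o (k+1) = ρ (o k)
    have o0 : orb ρ (y i0) 0 = y i0 := rfl
    have osucc : ∀ k, orb ρ (y i0) (k+1) = ρ (orb ρ (y i0) k) := fun _ => rfl
    have odom : ∀ k, orb ρ (y i0) k ∈ V''.dom := by
      intro k
      induction k with
      | zero => exact hyd i0
      | succ k ih => exact (hdomcl'' _ _ (hρdef _ ih)).1
    have odesc : ∀ k l, k ≤ l → V''.rel (orb ρ (y i0) l) (orb ρ (y i0) k) := by
      intro k l h
      induction l, h using Nat.le_induction with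
      | base => exact hrefl'' _ (odom k)
      | succ l hl ih => exact htrans'' _ _ _ (hρdef _ (odom l)) ih
    have hxstar : orb ρ (y i0) 1 = x i0 := hxy i0
    have o01 : orb ρ (y i0) 0 ≠ orb ρ (y i0) 1 := by
      intro h
      have h1 : orb ρ (y i0) 0 ∉ V.dom := freshy i0 hi0
      rw [h, hxstar] at h1
      exact h1 (hx i0)
    have oprop : ∀ j, orb ρ (y i0) j = orb ρ (y i0) (j+1) →
        orb ρ (y i0) 0 = orb ρ (y i0) 1 := by
      intro j
      induction j with
      | zero => exact id
      | succ j ih => intro h; exact ih (hρinj _ (odom j) _ (odom (j+1)) h)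
    have onei : ∀ k l, k < l → orb ρ (y i0) k ≠ orb ρ (y i0) l := by
      intro k l hkl heq
      have hrel2 : V''.rel (orb ρ (y i0) k) (orb ρ (y i0) (k+1)) := by
        rw [heq]; exact odesc (k+1) l hkl
      exact o01 (oprop k (hanti'' _ _ hrel2 (odesc k (k+1) (Nat.le_succ k))))
    have oinj : ∀ k l, orb ρ (y i0) k = orb ρ (y i0) l → k = l := by
      intro k l h
      rcases lt_trichotomy k l with h' | h' | h'
      · exact absurd h (onei _ _ h')
      · exact h'
      · exact absurd h.symm (onei _ _ h')
    have E : ∀ N : ℕ, ∃ k, N ≤ k ∧ (1 ≤ k ∧ orb ρ (y i0) k ∉ Set.range y) := by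
      intro N
      by_contra hcon
      push_neg at hcon
      have hf : ∀ i : Fin (n+1), ∃ j : Fin n, y j = orb ρ (y i0) (N + 1 + (i : ℕ)) := by
        intro i
        exact hcon (N + 1 + (i : ℕ)) (by omega) (by omega)
      choose f hfy using hf
      have finj : Function.Injective f := by
        intro i i' hii
        have h3 : orb ρ (y i0) (N + 1 + (i : ℕ)) = orb ρ (y i0) (N + 1 + (i' : ℕ)) := by
          rw [← hfy i, ← hfy i', hii]
        have h4 := oinj _ _ h3
        exact Fin.ext (by omega)
      have hcard := Fintype.card_le_of_injective f finj
      simp only [Fintype.card_fin] at hcard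
      omega
    -- the auxiliary sequence t
    set t : ℕ → α := fun k => orb ρ (y i0) (tauSeq E k) with ht
    have tdom : ∀ j, t j ∈ V''.dom := fun j => odom _
    have tinj : ∀ j l, t j = t l → j = l := by
      intro j l h
      exact (tauSeq_strictMono E).injective (oinj _ _ h)
    have tgood : ∀ j, orb ρ (y i0) (tauSeq E j) ∉ Set.range y :=
      fun j => (tauSeq_spec E j).2
    have tnotY : ∀ j (k : Fin n), t j ≠ y k := by
      intro j k h
      exact tgood j ⟨k, h.symm⟩
    have tlex : ∀ j, V''.rel (t j) (x i0) := by
      intro j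
      have := odesc 1 (tauSeq E j) (tauSeq_ge_one E j)
      rwa [hxstar] at this
    have tle : ∀ j l, j ≤ l → V''.rel (t l) (t j) :=
      fun j l h => odesc _ _ ((tauSeq_strictMono E).monotone h)
    have L1 : ∀ j, ∀ c : Fin (2*n), n ≤ (c : ℕ) → (∃ i, μ i = c) → ρ (t j) ≠ z c := by
      intro j c hc hhit heq
      have hle1 : V''.rel (z c) (t j) := by rw [← heq]; exact hρdef _ (tdom j)
      have hle2 : V''.rel (t j) (z c) := htrans'' _ _ _ (tlex j) (xlez i0 c hc hhit)
      have h3 : t j = z c := hanti'' _ _ hle2 hle1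
      have h4 : x i0 = z c := hanti'' _ _ (xlez i0 c hc hhit) (by rw [← h3]; exact tlex j)
      exact hz1' c hc (h4 ▸ hx i0)
    -- branch lemmas for sigmaF
    have σ1 : ∀ a (h : BadPt μ V'' ρ z a),
        sigmaF μ V'' ρ z t a = t (2 * ((h.2.choose : Fin (2*n)) : ℕ)) := by
      intro a h
      unfold sigmaF
      rw [dif_pos h]
    have σA : ∀ a, a ∈ V''.dom → ∀ c : Fin (2*n), n ≤ (c : ℕ) → (∃ i, μ i = c) →
        ρ a = z c → sigmaF μ V'' ρ z t a = t (2 * (c : ℕ)) := by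
      intro a ha c hc hhit heq
      have h : BadPt μ V'' ρ z a := ⟨ha, c, hc, hhit, heq⟩
      rw [σ1 a h]
      have hsp := h.2.choose_spec
      have hch : h.2.choose = c := hz2 _ _ hsp.1 hc (hsp.2.2.symm.trans heq)
      rw [hch]
    have σT : ∀ j, sigmaF μ V'' ρ z t (t j) = t (2 * j + 1) := by
      intro j
      have hnA : ¬ BadPt μ V'' ρ z (t j) := by
        rintro ⟨hd, c, hc, hhit, heq⟩
        exact L1 j c hc hhit heq
      have hB : ∃ k, t j = t k := ⟨j, rfl⟩
      unfold sigmaF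
      rw [dif_neg hnA, dif_pos hB]
      have hj := tinj _ _ hB.choose_spec
      rw [← hj]
    have σE : ∀ a, ¬ BadPt μ V'' ρ z a → (∀ j, a ≠ t j) → sigmaF μ V'' ρ z t a = a := by
      intro a hna h2'
      unfold sigmaF
      rw [dif_neg hna, dif_neg]
      rintro ⟨j, hj⟩
      exact h2' j hj
    have σY : ∀ j : Fin n, sigmaF μ V'' ρ z t (y j) = y j := by
      intro j
      apply σE
      · rintro ⟨hd, c, hc, hhit, heq⟩
        rw [hxy j] at heq
        exact hz1' c hc (heq ▸ hx j)
      · intro k h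
        exact tnotY k j h.symm
    -- structural properties of sigmaF
    have σdom : ∀ a, a ∈ V''.dom → sigmaF μ V'' ρ z t a ∈ V''.dom := by
      intro a ha
      by_cases h : BadPt μ V'' ρ z a
      · rw [σ1 a h]; exact tdom _
      · by_cases h2' : ∃ j, a = t j
        · obtain ⟨j, rfl⟩ := h2'
          rw [σT j]; exact tdom _
        · rw [σE a h (fun j hj => h2' ⟨j, hj⟩)]; exact ha
    have σrel : ∀ a, a ∈ V''.dom → V''.rel (sigmaF μ V'' ρ z t a) a := by
      intro a ha
      by_cases h : BadPt μ V'' ρ z a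
      · obtain ⟨hd, c, hc, hhit, heq⟩ := h
        rw [σA a ha c hc hhit heq]
        refine htrans'' _ _ _ (htrans'' _ _ _ (tlex _) (xlez i0 c hc hhit)) ?_
        rw [← heq]
        exact hρdef a ha
      · by_cases h2' : ∃ j, a = t j
        · obtain ⟨j, rfl⟩ := h2'
          rw [σT j]
          exact tle j (2*j+1) (by omega)
        · rw [σE a h (fun j hj => h2' ⟨j, hj⟩)]
          exact hrefl'' a ha
    have σavoid : ∀ a, a ∈ V''.dom → ∀ c : Fin (2*n), n ≤ (c : ℕ) → (∃ i, μ i = c) →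
        ρ (sigmaF μ V'' ρ z t a) ≠ z c := by
      intro a ha c hc hhit
      by_cases h : BadPt μ V'' ρ z a
      · rw [σ1 a h]; exact L1 _ c hc hhit
      · by_cases h2' : ∃ j, a = t j
        · obtain ⟨j, rfl⟩ := h2'
          rw [σT j]; exact L1 _ c hc hhit
        · rw [σE a h (fun j hj => h2' ⟨j, hj⟩)]
          intro heq
          exact h ⟨ha, c, hc, hhit, heq⟩
    have σinj : ∀ a, a ∈ V''.dom → ∀ b, b ∈ V''.dom →
        sigmaF μ V'' ρ z t a = sigmaF μ V'' ρ z t b → a = b := by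
      intro a ha b hb hab
      by_cases h : BadPt μ V'' ρ z a <;> by_cases h' : BadPt μ V'' ρ z b
      · obtain ⟨_, c, hc, hhit, heq⟩ := h
        obtain ⟨_, c', hc', hhit', heq'⟩ := h'
        rw [σA a ha c hc hhit heq, σA b hb c' hc' hhit' heq'] at hab
        have hcc := tinj _ _ hab
        have hcc2 : c = c' := Fin.ext (by omega)
        subst hcc2
        exact hρinj a ha b hb (heq.trans heq'.symm)
      · obtain ⟨_, c, hc, hhit, heq⟩ := h
        rw [σA a ha c hc hhit heq] at hab
        by_cases h2' : ∃ j, b = t j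
        · obtain ⟨j, rfl⟩ := h2'
          rw [σT j] at hab
          have := tinj _ _ hab
          omega
        · rw [σE b h' (fun j hj => h2' ⟨j, hj⟩)] at hab
          exact absurd ⟨2 * (c : ℕ), hab.symm⟩ h2'
      · obtain ⟨_, c, hc, hhit, heq⟩ := h'
        rw [σA b hb c hc hhit heq] at hab
        by_cases h2' : ∃ j, a = t j
        · obtain ⟨j, rfl⟩ := h2'
          rw [σT j] at hab
          have := tinj _ _ hab
          omega
        · rw [σE a h (fun j hj => h2' ⟨j, hj⟩)] at hab
          exact absurd ⟨2 * (c : ℕ), hab⟩ h2'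
      · by_cases h2' : ∃ j, a = t j <;> by_cases h3' : ∃ j, b = t j
        · obtain ⟨j, rfl⟩ := h2'
          obtain ⟨k, rfl⟩ := h3'
          rw [σT j, σT k] at hab
          have hjk := tinj _ _ hab
          have : j = k := by omega
          rw [this]
        · obtain ⟨j, rfl⟩ := h2'
          rw [σT j, σE b h' (fun k hk => h3' ⟨k, hk⟩)] at hab
          exact absurd ⟨2*j+1, hab.symm⟩ h3'
        · obtain ⟨k, rfl⟩ := h3'
          rw [σT k, σE a h (fun j hj => h2' ⟨j, hj⟩)] at hab
          exact absurd ⟨2*k+1, hab⟩ h2'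
        · rw [σE a h (fun j hj => h2' ⟨j, hj⟩), σE b h' (fun j hj => h3' ⟨j, hj⟩)] at hab
          exact hab
    -- the final flashback
    have ρ'w : ∀ c : Fin (2*n), n ≤ (c : ℕ) → (∃ i, μ i = c) →
        rhoF μ V'' ρ z w t (w c) = z c := by
      intro c hc hhit
      have h : ∃ c' : Fin (2*n), n ≤ (c' : ℕ) ∧ (∃ i, μ i = c') ∧ w c = w c' :=
        ⟨c, hc, hhit, rfl⟩
      unfold rhoF
      rw [dif_pos h]
      have hsp := h.choose_spec
      have : h.choose = c := (hw2 c _ hc hsp.1 hsp.2.2).symm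
      rw [this]
    have ρ'dom : ∀ a, a ∈ V''.dom → rhoF μ V'' ρ z w t a = ρ (sigmaF μ V'' ρ z t a) := by
      intro a ha
      unfold rhoF
      rw [dif_neg]
      rintro ⟨c, hc, hhit, rfl⟩
      exact hw1' c hc ha
    refine ⟨rhoF μ V'' ρ z w t, ⟨?_, ?_⟩, ?_⟩
    · -- injectivity
      intro a ha b hb hab
      rcases hdom''' a ha with ha' | ⟨c, hc, hhit, rfl⟩
      · rcases hdom''' b hb with hb' | ⟨c', hc', hhit', rfl⟩
        · rw [ρ'dom a ha', ρ'dom b hb'] at hab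
          exact σinj a ha' b hb' (hρinj _ (σdom a ha') _ (σdom b hb') hab)
        · rw [ρ'dom a ha', ρ'w c' hc' hhit'] at hab
          exact absurd hab (σavoid a ha' c' hc' hhit')
      · rcases hdom''' b hb with hb' | ⟨c', hc', hhit', rfl⟩
        · rw [ρ'w c hc hhit, ρ'dom b hb'] at hab
          exact absurd hab.symm (σavoid b hb' c hc hhit)
        · rw [ρ'w c hc hhit, ρ'w c' hc' hhit'] at hab
          rw [hz2 c c' hc hc' hab]
    · -- deflationary
      intro a ha
      rcases hdom''' a ha with ha' | ⟨c, hc, hhit, rfl⟩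
      · rw [hw4', ρ'dom a ha']
        exact Or.inl (htrans'' _ _ _ (hρdef _ (σdom a ha')) (σrel a ha'))
      · rw [hw4', ρ'w c hc hhit]
        obtain ⟨i1, hi1⟩ := hhit
        have hfr : n ≤ (μ i1 : ℕ) := by rw [hi1]; exact hc
        have hzy : V''.rel (z c) (y i1) := by rw [← hi1]; exact chainz i1 hfr
        exact Or.inr (Or.inr ⟨⟨c, hc, ⟨i1, hi1⟩, rfl⟩, y i1, ⟨i1, rfl⟩, y i1,
          hrefl'' _ (hyd i1), hzy⟩)
    · -- the pinning property
      intro i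
      by_cases h : ((μ i : ℕ) < n)
      · rw [hw3' i, dif_pos h, hz3' i, dif_pos h]
        rw [ρ'dom _ (hyd _), σY _, hxy _]
      · rw [hw3' i, dif_neg h, hz3' i, dif_neg h]
        exact ρ'w (μ i) (Nat.le_of_not_lt h) ⟨i, rfl⟩
  · -- trivial case: no fresh entries at all
    push_neg at hex
    refine ⟨ρ, ⟨?_, ?_⟩, ?_⟩
    · intro a ha b hb hab
      rcases hdom''' a ha with ha' | ⟨c, hc, ⟨i, rfl⟩, rfl⟩
      · rcases hdom''' b hb with hb' | ⟨c, hc, ⟨i, rfl⟩, rfl⟩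
        · exact hρinj a ha' b hb' hab
        · exact absurd hc (Nat.not_le.2 (hex i))
      · exact absurd hc (Nat.not_le.2 (hex i))
    · intro a ha
      rcases hdom''' a ha with ha' | ⟨c, hc, ⟨i, rfl⟩, rfl⟩
      · rw [hw4']
        exact Or.inl (hρdef a ha')
      · exact absurd hc (Nat.not_le.2 (hex i))
    · intro i
      rw [hw3' i, dif_pos (hex i), hz3' i, dif_pos (hex i)]
      exact hxy _
end

section
/- Two ≈-equivalent mutations induce the same transformation up to the choice of fresh names: if μ ≈ μ' and ⟨(x₁,...,xₙ),V⟩ →μ ⟨(y₁,...,yₙ),V₁⟩ and ⟨(x₁,...,xₙ),V⟩ →μ' ⟨(z₁,...,zₙ),V₂⟩, then there exists a bijective renaming ι fixing x₁,...,xₙ such that ι(yᵢ) = zᵢ for all i and ι(V₁) = V₂. -/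
/-- Equivalence of mutations (bijection on fresh codes, identity on old). -/
def MutEquiv (n : ℕ) (μ μ' : Fin n → Fin (2*n)) : Prop :=
  ∃ f : Fin (2*n) → Fin (2*n),
    Set.BijOn f {c | n ≤ (c : ℕ)} {c | n ≤ (c : ℕ)} ∧
    ∀ i, ((μ i : ℕ) < n → μ' i = μ i) ∧ (n ≤ (μ i : ℕ) → μ' i = f (μ i))

lemma keyPerm {β α : Type} [Fintype β] (p q : β → α)
    (hp : Function.Injective p) (hq : Function.Injective q) :
    ∃ ι : α → α, Function.Bijective ι ∧
      (∀ a, a ∉ Set.range p ∪ Set.range q → ι a = a) ∧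
      (∀ a, a ∈ Set.range p ∪ Set.range q → ι a ∈ Set.range p ∪ Set.range q) ∧
      (∀ b, ι (p b) = q b) := by
  classical
  set D : Set α := Set.range p ∪ Set.range q with hDdef
  have hDfin : D.Finite := (Set.finite_range p).union (Set.finite_range q)
  haveI : Fintype ↥D := hDfin.fintype
  haveI : Fintype ↥(D \ Set.range p) := (hDfin.subset Set.diff_subset).fintype
  haveI : Fintype ↥(D \ Set.range q) := (hDfin.subset Set.diff_subset).fintype
  have he : ∀ (r : β → α) (hr : Function.Injective r) (hsub : ∀ b, r b ∈ D),
      Function.Bijective (Sum.elim (fun b => (⟨r b, hsub b⟩ : ↥D))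
        (fun x : ↥(D \ Set.range r) => ⟨x.1, x.2.1⟩)) := by
    intro r hr hsub
    constructor
    · rintro (b | x) (b' | x') hEq <;>
        simp only [Sum.elim_inl, Sum.elim_inr, Subtype.mk.injEq] at hEq
      · exact congrArg Sum.inl (hr hEq)
      · exact absurd ⟨b, hEq⟩ x'.2.2
      · exact absurd ⟨b', hEq.symm⟩ x.2.2
      · exact congrArg Sum.inr (Subtype.ext hEq)
    · rintro ⟨d, hd⟩
      by_cases hdp : d ∈ Set.range r
      · obtain ⟨b, hb⟩ := hdp
        exact ⟨Sum.inl b, Subtype.ext hb⟩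
      · exact ⟨Sum.inr ⟨d, hd, hdp⟩, rfl⟩
  let e1 := Equiv.ofBijective _ (he p hp (fun b => Or.inl ⟨b, rfl⟩))
  let e2 := Equiv.ofBijective _ (he q hq (fun b => Or.inr ⟨b, rfl⟩))
  have hcard : Fintype.card ↥(D \ Set.range p) = Fintype.card ↥(D \ Set.range q) := by
    have h1 := Fintype.card_congr e1
    have h2 := Fintype.card_congr e2
    simp only [Fintype.card_sum] at h1 h2
    omega
  let g := Fintype.equivOfCardEq hcard
  let eD : ↥D ≃ ↥D := e1.symm.trans ((Equiv.sumCongr (Equiv.refl β) g).trans e2)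
  let ιe := Equiv.Perm.extendDomain eD (Equiv.refl ↥D)
  refine ⟨ιe, ιe.bijective, ?_, ?_, ?_⟩
  · intro a ha
    exact Equiv.Perm.extendDomain_apply_not_subtype eD (Equiv.refl ↥D) ha
  · intro a ha
    rw [Equiv.Perm.extendDomain_apply_subtype eD (Equiv.refl ↥D) ha]
    exact (eD _).2
  · intro b
    have hb : p b ∈ D := Or.inl ⟨b, rfl⟩
    rw [show ιe = Equiv.Perm.extendDomain eD (Equiv.refl ↥D) from rfl,
      Equiv.Perm.extendDomain_apply_subtype eD (Equiv.refl ↥D) hb]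
    have hsy : e1.symm ⟨p b, hb⟩ = Sum.inl b := by
      rw [Equiv.symm_apply_eq]; rfl
    show ((eD ⟨p b, hb⟩ : ↥D) : α) = q b
    simp only [eD, Equiv.trans_apply, hsy, Equiv.sumCongr_apply, Sum.map_inl, Equiv.refl_apply]
    rfl

/-- Two `≈`-equivalent mutations induce the same transformation up to a
bijective renaming fixing the original names. -/
theorem stmt9 {α : Type} {n : ℕ} (μ μ' : Fin n → Fin (2*n))
    (h : MutEquiv n μ μ') (x y z : Fin n → α) (V V1 V2 : NamePO α)
    (hV : IsPO V) (hx : ∀ i, x i ∈ V.dom)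
    (h1 : MutStep μ (x, V) (y, V1)) (h2 : MutStep μ' (x, V) (z, V2)) :
    ∃ ι : α → α, Function.Bijective ι ∧ (∀ i, ι (x i) = x i) ∧
      (∀ i, ι (y i) = z i) ∧ (∀ a b, V2.rel (ι a) (ι b) ↔ V1.rel a b) ∧
      V2.dom = ι '' V1.dom := by
  classical
  obtain ⟨f, hfbij, hfmu⟩ := h
  obtain ⟨z1, hz1f, hz1i, hy, hV1⟩ := h1
  obtain ⟨w, hwf, hwi, hz, hV2⟩ := h2
  dsimp only at hz1f hz1i hy hV1 hwf hwi hz hV2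
  set S : Set (Fin (2*n)) := {c | n ≤ (c : ℕ) ∧ ∃ i, μ i = c} with hSdef
  haveI : Fintype ↥S := (Set.toFinite S).fintype
  set p : ↥S → α := fun c => z1 c.1 with hpdef
  set q : ↥S → α := fun c => w (f c.1) with hqdef
  have hp : Function.Injective p := by
    rintro ⟨c, hc⟩ ⟨c', hc'⟩ hEq
    exact Subtype.ext (hz1i c c' hc.1 hc'.1 hEq)
  have hq : Function.Injective q := by
    rintro ⟨c, hc⟩ ⟨c', hc'⟩ hEq
    exact Subtype.ext (hfbij.2.1 hc.1 hc'.1 (hwi (f c) (f c') (hfbij.1 hc.1) (hfbij.1 hc'.1) hEq))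
  obtain ⟨ι, hbij, hfix, hmem, hpq⟩ := keyPerm p q hp hq
  -- the two sets of fresh names
  have hZ1 : {a | ∃ c : Fin (2*n), n ≤ (c : ℕ) ∧ (∃ i, μ i = c) ∧ a = z1 c} = Set.range p := by
    ext a
    constructor
    · rintro ⟨c, hc1, hc2, rfl⟩; exact ⟨⟨c, hc1, hc2⟩, rfl⟩
    · rintro ⟨⟨c, hc1, hc2⟩, rfl⟩; exact ⟨c, hc1, hc2, rfl⟩
  have hZ2 : {a | ∃ c : Fin (2*n), n ≤ (c : ℕ) ∧ (∃ i, μ' i = c) ∧ a = w c} = Set.range q := by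
    ext a
    constructor
    · rintro ⟨c', hc1, ⟨i, hi⟩, rfl⟩
      have hn : n ≤ (μ i : ℕ) := by
        by_contra hlt
        push_neg at hlt
        rw [(hfmu i).1 hlt] at hi
        subst hi
        omega
      refine ⟨⟨μ i, hn, i, rfl⟩, ?_⟩
      show w (f (μ i)) = w c'
      rw [← (hfmu i).2 hn, hi]
    · rintro ⟨⟨c, hc1, i, hi⟩, rfl⟩
      subst hi
      exact ⟨f (μ i), hfbij.1 hc1, ⟨i, (hfmu i).2 hc1⟩, rfl⟩
  -- fresh names avoid V.dom
  have hDV : ∀ a ∈ Set.range p ∪ Set.range q, a ∉ V.dom := by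
    rintro a (⟨⟨c, hc⟩, rfl⟩ | ⟨⟨c, hc⟩, rfl⟩)
    · exact hz1f c hc.1
    · exact hwf (f c) (hfbij.1 hc.1)
  have hfixdom : ∀ a ∈ V.dom, ι a = a := fun a ha =>
    hfix a (fun hD => hDV a hD ha)
  have hmove : ∀ a, ι a ∈ V.dom → ι a = a := by
    intro a ha
    by_cases hD : a ∈ Set.range p ∪ Set.range q
    · exact absurd (hmem a hD) (fun hh => hDV _ hh ha)
    · exact hfix a hD
  have hZiff : ∀ a, ι a ∈ Set.range q ↔ a ∈ Set.range p := by
    intro a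
    constructor
    · rintro ⟨b, hb⟩
      have : ι (p b) = ι a := by rw [hpq b, hb]
      exact ⟨b, hbij.1 this⟩
    · rintro ⟨b, rfl⟩; exact ⟨b, (hpq b).symm⟩
  have hrelV : ∀ a b, V.rel (ι a) (ι b) ↔ V.rel a b := by
    intro a b
    constructor
    · intro hr
      have ha := (hV.2.2.2 _ _ hr).1
      have hb := (hV.2.2.2 _ _ hr).2
      rwa [hmove a ha, hmove b hb] at hr
    · intro hr
      rw [hfixdom a (hV.2.2.2 _ _ hr).1, hfixdom b (hV.2.2.2 _ _ hr).2]
      exact hr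
  have hrelA : ∀ a y₀, V.rel (ι a) y₀ ↔ V.rel a y₀ := by
    intro a y₀
    constructor
    · intro hr; rwa [hmove a (hV.2.2.2 _ _ hr).1] at hr
    · intro hr; rwa [hfixdom a (hV.2.2.2 _ _ hr).1]
  refine ⟨ι, hbij, fun i => hfixdom _ (hx i), ?_, ?_, ?_⟩
  · -- ι (y i) = z i
    intro i
    by_cases hlt : (μ i : ℕ) < n
    · have hμ' : μ' i = μ i := (hfmu i).1 hlt
      have hy' : y i = x ⟨(μ i : ℕ), hlt⟩ := by rw [hy i, dif_pos hlt]
      have hz' : z i = x ⟨(μ i : ℕ), hlt⟩ := by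
        rw [hz i, hμ', dif_pos hlt]
      rw [hy', hz', hfixdom _ (hx _)]
    · push_neg at hlt
      have hμ' : μ' i = f (μ i) := (hfmu i).2 hlt
      have hy' : y i = p ⟨μ i, hlt, i, rfl⟩ := by
        rw [hy i, dif_neg (not_lt.mpr hlt)]
      have hz' : z i = w (f (μ i)) := by
        rw [hz i, hμ', dif_neg (not_lt.mpr (hfbij.1 hlt))]
      rw [hy', hz']
      exact hpq ⟨μ i, hlt, i, rfl⟩
  · -- relation condition
    intro a b
    subst hV1 hV2
    show (_ ∨ _ ∨ _) ↔ (_ ∨ _ ∨ _)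
    rw [hZ1, hZ2]
    refine or_congr (hrelV a b) (or_congr (and_congr (hZiff a) ?_) (and_congr (hZiff b) ?_))
    · exact ⟨fun hh => hbij.1 hh, fun hh => by rw [hh]⟩
    · exact exists_congr fun x₀ => and_congr Iff.rfl <| exists_congr fun y₀ =>
        and_congr Iff.rfl (hrelA a y₀)
  · -- dom condition
    subst hV1 hV2
    show V.dom ∪ _ = ι '' (V.dom ∪ _)
    rw [hZ1, hZ2, Set.image_union]
    congr 1
    · ext a
      constructor
      · intro ha; exact ⟨a, ha, hfixdom a ha⟩
      · rintro ⟨b, hb, rfl⟩; rwa [hfixdom b hb]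
    · ext a
      constructor
      · rintro ⟨b, rfl⟩; exact ⟨p b, ⟨b, rfl⟩, hpq b⟩
      · rintro ⟨_, ⟨b, rfl⟩, rfl⟩; exact hpq b ▸ ⟨b, rfl⟩
end

section
/- The extension operation on partial orders is well-defined: given a partial order V on names, names x̃ ∈ V and fresh names z̃ ∉ V, the least reflexive transitive relation containing V ∪ {(y,z) | ∃x ∈ x̃, (x,y) ∈ V, z ∈ z̃} is a partial order (antisymmetric), and each z ∈ z̃ is a maximal element of it. -/
/-- The least reflexive-transitive relation containing `V` together with the
pairs `(y, z)` for `y` above some `x ∈ X` in `V` and `z ∈ Z`. -/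
def extRel {α : Type} (V : α → α → Prop) (X Z : Set α) : α → α → Prop :=
  Relation.ReflTransGen (fun a b => V a b ∨ ((∃ x ∈ X, V x a) ∧ b ∈ Z))

/-- The extension operation `V ⊕ X < Z` is well-defined: for a partial order
`V`, names `X` occurring in `V` and fresh names `Z`, the generated reflexive
transitive relation is antisymmetric (hence a partial order) and every
`z ∈ Z` is maximal in it. -/
theorem stmt10 {α : Type} (V : α → α → Prop) (X Z : Set α)
    (hrefl : ∀ x y, V x y → V x x ∧ V y y)
    (hanti : ∀ x y, V x y → V y x → x = y)
    (htrans : ∀ x y z, V x y → V y z → V x z)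
    (hX : ∀ x ∈ X, V x x)
    (hZ : ∀ z ∈ Z, ∀ a, ¬ V z a ∧ ¬ V a z) :
    (∀ a, extRel V X Z a a) ∧
    (∀ a b c, extRel V X Z a b → extRel V X Z b c → extRel V X Z a c) ∧
    (∀ a b, extRel V X Z a b → extRel V X Z b a → a = b) ∧
    (∀ z ∈ Z, ∀ b, extRel V X Z z b → b = z) := by
  -- maximality of elements of Z
  have hmax : ∀ z ∈ Z, ∀ b, extRel V X Z z b → b = z := by
    intro z hz b h
    rcases (Relation.ReflTransGen.cases_head h) with h | ⟨c, hc, _⟩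
    · exact h.symm
    · rcases hc with hv | ⟨⟨x, _, hxz⟩, _⟩
      · exact absurd hv (hZ z hz c).1
      · exact absurd hxz (hZ z hz x).2
  -- characterization
  have hchar : ∀ a b, extRel V X Z a b → a = b ∨ V a b ∨ b ∈ Z := by
    intro a b h
    induction h with
    | refl => exact Or.inl rfl
    | tail _ hstep ih =>
      rename_i c d _
      rcases hstep with hv | ⟨_, hd⟩
      · rcases ih with rfl | hac | hc
        · exact Or.inr (Or.inl hv)
        · exact Or.inr (Or.inl (htrans _ _ _ hac hv))
        · exact absurd hv (hZ c hc d).1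
      · exact Or.inr (Or.inr hd)
  refine ⟨fun a => Relation.ReflTransGen.refl,
    fun a b c hab hbc => hab.trans hbc, ?_, hmax⟩
  intro a b hab hba
  by_cases haZ : a ∈ Z
  · exact (hmax a haZ b hab).symm
  by_cases hbZ : b ∈ Z
  · exact hmax b hbZ a hba
  rcases hchar a b hab with rfl | hvab | h
  · rfl
  · rcases hchar b a hba with rfl | hvba | h
    · rfl
    · exact hanti _ _ hvab hvba
    · exact absurd h haZ
  · exact absurd h hbZ
end

section
/- Erasure commutes with reduction: for the informative semantics of lam programs, (1) any informative reduction ⟨V, F, L⟩ → ⟨V', F', L'⟩ projects, by erasing histories, to a reduction ⟨V, ⟦L⟧⟩ → ⟨V', ⟦L'⟧⟩ of the plain semantics; and (2) any plain reduction from ⟨V, ⟦L⟧⟩ lifts to an informative reduction from ⟨V, F, L⟩ with matching erasure. -/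
/-- Lam terms: `0`, dependency pairs, function invocations, `&`, `+`. -/
inductive Lam (α F : Type) where
  | zero : Lam α F
  | pair (x y : α) : Lam α F
  | inv (f : F) (args : List α) : Lam α F
  | par (p q : Lam α F) : Lam α F
  | choice (p q : Lam α F) : Lam α F

/-- The set of names occurring in a lam. -/
def Lam.names {α F : Type} : Lam α F → Set α
  | .zero => ∅
  | .pair x y => {x, y}
  | .inv _ as => {a | a ∈ as}
  | .par p q => p.names ∪ q.names
  | .choice p q => p.names ∪ q.names

/-- Renaming acting pointwise on the names of a lam. -/
def Lam.rename {α F : Type} (σ : α → α) : Lam α F → Lam α F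
  | .zero => .zero
  | .pair x y => .pair (σ x) (σ y)
  | .inv f as => .inv f (as.map σ)
  | .par p q => .par (p.rename σ) (q.rename σ)
  | .choice p q => .choice (p.rename σ) (q.rename σ)

/-- Lam contexts `[] | P & L | P + L`. -/
inductive Ctx (α F : Type) where
  | hole : Ctx α F
  | par (p : Lam α F) (c : Ctx α F) : Ctx α F
  | choice (p : Lam α F) (c : Ctx α F) : Ctx α F

/-- Filling the hole of a context. -/
def Ctx.fill {α F : Type} : Ctx α F → Lam α F → Lam α F
  | .hole, q => q
  | .par p c, q => .par p (c.fill q)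
  | .choice p c, q => .choice p (c.fill q)

/-- A lam program: formal parameters and body for every function name. -/
structure Prog (α F : Type) where
  params : F → List α
  body : F → Lam α F

/-- The free names of the body of `f` (names not among the formal
parameters). -/
def freeNames {α F : Type} (pr : Prog α F) (f : F) : Set α :=
  (pr.body f).names \ {a | a ∈ pr.params f}

/-- The reduction rule (Red): replace an invocation `f(args)` in a lam context
by the instantiated body, substituting arguments for formal parameters and
fresh maximal names for free names, extending the partial order accordingly. -/
def Red {α F : Type} (pr : Prog α F) :
    (NamePO α × Lam α F) → (NamePO α × Lam α F) → Prop :=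
  fun s t => ∃ (C : Ctx α F) (f : F) (args : List α) (σ : α → α),
    s.2 = C.fill (.inv f args) ∧
    args.length = (pr.params f).length ∧
    (∀ (k : ℕ) (h1 : k < (pr.params f).length) (h2 : k < args.length),
        σ ((pr.params f).get ⟨k, h1⟩) = args.get ⟨k, h2⟩) ∧
    (∀ v ∈ freeNames pr f, σ v ∉ s.1.dom) ∧
    (∀ v ∈ freeNames pr f, ∀ w ∈ freeNames pr f, σ v = σ w → v = w) ∧
    t.1 = extendPO s.1 {a | a ∈ args} (σ '' freeNames pr f) ∧
    t.2 = C.fill ((pr.body f).rename σ)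

/-- Informative lams: dependency pairs and invocations carry histories
(sequences of function names). -/
inductive ILam (α F : Type) where
  | zero : ILam α F
  | pair (h : List F) (x y : α) : ILam α F
  | inv (h : List F) (f : F) (args : List α) : ILam α F
  | par (p q : ILam α F) : ILam α F
  | choice (p q : ILam α F) : ILam α F

/-- The eraser map: remove all history annotations. -/
def ILam.erase {α F : Type} : ILam α F → Lam α F
  | .zero => .zero
  | .pair _ x y => .pair x y
  | .inv _ f as => .inv f as
  | .par p q => .par p.erase q.erase
  | .choice p q => .choice p.erase q.erase

/-- Label every dependency pair and invocation of a lam with history `h`. -/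
def Lam.label {α F : Type} (h : List F) : Lam α F → ILam α F
  | .zero => .zero
  | .pair x y => .pair h x y
  | .inv f as => .inv h f as
  | .par p q => .par (p.label h) (q.label h)
  | .choice p q => .choice (p.label h) (q.label h)

/-- Informative lam contexts. -/
inductive ICtx (α F : Type) where
  | hole : ICtx α F
  | par (p : ILam α F) (c : ICtx α F) : ICtx α F
  | choice (p : ILam α F) (c : ICtx α F) : ICtx α F

/-- Filling the hole of an informative context. -/
def ICtx.fill {α F : Type} : ICtx α F → ILam α F → ILam α F
  | .hole, q => q
  | .par p c, q => .par p (c.fill q)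
  | .choice p c, q => .choice p (c.fill q)

/-- The informative reduction rule (Red+): evaluate a history-labelled
invocation `α:f(args)`, record it in the set of evaluated invocations, and
label the instantiated body with history `α·f`. -/
def RedI {α F : Type} (pr : Prog α F) :
    (NamePO α × Set (List F × F × List α) × ILam α F) →
    (NamePO α × Set (List F × F × List α) × ILam α F) → Prop :=
  fun s t => ∃ (C : ICtx α F) (h : List F) (f : F) (args : List α) (σ : α → α),
    s.2.2 = C.fill (.inv h f args) ∧
    args.length = (pr.params f).length ∧
    (∀ (k : ℕ) (h1 : k < (pr.params f).length) (h2 : k < args.length),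
        σ ((pr.params f).get ⟨k, h1⟩) = args.get ⟨k, h2⟩) ∧
    (∀ v ∈ freeNames pr f, σ v ∉ s.1.dom) ∧
    (∀ v ∈ freeNames pr f, ∀ w ∈ freeNames pr f, σ v = σ w → v = w) ∧
    t.1 = extendPO s.1 {a | a ∈ args} (σ '' freeNames pr f) ∧
    t.2.1 = s.2.1 ∪ {(h, f, args)} ∧
    t.2.2 = C.fill (((pr.body f).rename σ).label (h ++ [f]))


def eraseCtx {α F : Type} : ICtx α F → Ctx α F
  | .hole => .hole
  | .par p c => .par p.erase (eraseCtx c)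
  | .choice p c => .choice p.erase (eraseCtx c)

theorem erase_fill {α F : Type} (C : ICtx α F) (M : ILam α F) :
    (C.fill M).erase = (eraseCtx C).fill M.erase := by
  induction C with
  | hole => rfl
  | par p c ih => simp [ICtx.fill, Ctx.fill, ILam.erase, eraseCtx, ih]
  | choice p c ih => simp [ICtx.fill, Ctx.fill, ILam.erase, eraseCtx, ih]

theorem erase_label {α F : Type} (h : List F) (P : Lam α F) :
    (P.label h).erase = P := by
  induction P with
  | zero => rfl
  | pair x y => rfl
  | inv f as => rfl
  | par p q ihp ihq => simp [Lam.label, ILam.erase, ihp, ihq]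
  | choice p q ihp ihq => simp [Lam.label, ILam.erase, ihp, ihq]

theorem decompose {α F : Type} (L : ILam α F) (C : Ctx α F) (f : F)
    (args : List α) (h : L.erase = C.fill (.inv f args)) :
    ∃ (hst : List F) (D : ICtx α F),
      L = D.fill (.inv hst f args) ∧ eraseCtx D = C := by
  induction C generalizing L with
  | hole =>
    cases L with
    | inv h0 f0 as0 =>
      simp [ILam.erase, Ctx.fill] at h
      exact ⟨h0, .hole, by simp [ICtx.fill, h.1, h.2], rfl⟩
    | zero => simp [ILam.erase, Ctx.fill] at h
    | pair h0 x y => simp [ILam.erase, Ctx.fill] at h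
    | par p q => simp [ILam.erase, Ctx.fill] at h
    | choice p q => simp [ILam.erase, Ctx.fill] at h
  | par p c ih =>
    cases L with
    | par p1 q1 =>
      simp [ILam.erase, Ctx.fill] at h
      obtain ⟨hst, D, hq, hD⟩ := ih q1 h.2
      exact ⟨hst, .par p1 D, by simp [ICtx.fill, hq], by simp [eraseCtx, hD, h.1]⟩
    | zero => simp [ILam.erase, Ctx.fill] at h
    | pair h0 x y => simp [ILam.erase, Ctx.fill] at h
    | inv h0 f0 as0 => simp [ILam.erase, Ctx.fill] at h
    | choice p1 q1 => simp [ILam.erase, Ctx.fill] at h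
  | choice p c ih =>
    cases L with
    | choice p1 q1 =>
      simp [ILam.erase, Ctx.fill] at h
      obtain ⟨hst, D, hq, hD⟩ := ih q1 h.2
      exact ⟨hst, .choice p1 D, by simp [ICtx.fill, hq], by simp [eraseCtx, hD, h.1]⟩
    | zero => simp [ILam.erase, Ctx.fill] at h
    | pair h0 x y => simp [ILam.erase, Ctx.fill] at h
    | inv h0 f0 as0 => simp [ILam.erase, Ctx.fill] at h
    | par p1 q1 => simp [ILam.erase, Ctx.fill] at h

/-- Erasure commutes with reduction: informative reductions project to plain
reductions, and plain reductions lift to informative ones with matching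
erasure. -/
theorem stmt16 {α F : Type} (pr : Prog α F) :
    (∀ (V V' : NamePO α) (Fs Fs' : Set (List F × F × List α))
        (L L' : ILam α F),
        RedI pr (V, Fs, L) (V', Fs', L') →
        Red pr (V, L.erase) (V', L'.erase)) ∧
    (∀ (V V' : NamePO α) (Fs : Set (List F × F × List α))
        (L : ILam α F) (P' : Lam α F),
        Red pr (V, L.erase) (V', P') →
        ∃ (Fs' : Set (List F × F × List α)) (L' : ILam α F),
          L'.erase = P' ∧ RedI pr (V, Fs, L) (V', Fs', L')) := by
  constructor
  · rintro V V' Fs Fs' L L' ⟨C, h, f, args, σ, h1, h2, h3, h4, h5, h6, h7, h8⟩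
    refine ⟨eraseCtx C, f, args, σ, ?_, h2, h3, h4, h5, h6, ?_⟩
    · simp only at h1; rw [h1, erase_fill]; rfl
    · simp only at h8 ⊢; rw [h8, erase_fill, erase_label]
  · rintro V V' Fs L P' ⟨C, f, args, σ, h1, h2, h3, h4, h5, h6, h7⟩
    obtain ⟨hst, D, hD, hDC⟩ := decompose L C f args h1
    refine ⟨Fs ∪ {(hst, f, args)},
      D.fill (((pr.body f).rename σ).label (hst ++ [f])), ?_,
      D, hst, f, args, σ, hD, h2, h3, h4, h5, h6, rfl, rfl⟩
    simp only at h7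
    rw [erase_fill, erase_label, hDC, h7]
end

section
/- If a lam program is linear recursive, then every function name f has exactly one recursive history, and for functions f, g in the same strongly connected component of the call graph, the recursive history of g is a cyclic rotation of the recursive history of f. -/
/-- A recursive history of `f`: a simple cycle through `f` in the call graph
(nodes pairwise distinct, consecutive calls, and the last node calls `f`). -/
def IsRecHist {F : Type} (calls : F → Multiset F) (f : F) (l : List F) : Prop :=
  l ≠ [] ∧ l.Nodup ∧ l.head? = some f ∧
  l.Chain' (fun a b => b ∈ calls a) ∧
  ∀ a, l.getLast? = some a → f ∈ calls a

/-- Linear recursion: every function has exactly one recursive history, and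
along the cycle each body contains exactly one invocation of the next
function. -/
def LinearRec {F : Type} [DecidableEq F] (calls : F → Multiset F) : Prop :=
  (∀ f, ∃! l, IsRecHist calls f l) ∧
  ∀ f l, IsRecHist calls f l →
    (l.Chain' (fun a b => (calls a).count b = 1) ∧
     ∀ a, l.getLast? = some a → (calls a).count f = 1)

/-- From any reflexive-transitive chain one can extract a duplicate-free path
with the same endpoints. -/
lemma exists_nodup_chain {F : Type} {r : F → F → Prop} {y x : F}
    (h : Relation.ReflTransGen r y x) :
    ∃ p : List F, p ≠ [] ∧ p.head? = some y ∧ p.getLast? = some x ∧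
      p.Nodup ∧ p.Chain' r := by
  induction h with
  | refl => exact ⟨[y], by simp [List.Chain']⟩
  | @tail b c hyb hbc ih =>
    obtain ⟨p, hne, hhd, hlast, hnd, hch⟩ := ih
    by_cases hc : c ∈ p
    · obtain ⟨s, t, rfl⟩ := List.append_of_mem hc
      refine ⟨s ++ [c], by simp, ?_, List.getLast?_concat, ?_, ?_⟩
      · rw [List.head?_append] at hhd ⊢; simpa using hhd
      · have hsub : List.Sublist (s ++ [c]) (s ++ c :: t) :=
          List.Sublist.append_left (by simp) s
        exact hsub.nodup hnd
      · have heq : (s ++ [c]) ++ t = s ++ c :: t := by simp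
        rw [← heq] at hch
        exact (List.isChain_append.mp hch).1
    · refine ⟨p ++ [c], by simp, ?_, List.getLast?_concat, ?_, ?_⟩
      · rw [List.head?_append, hhd]; simp [Option.or]
      · exact List.nodup_append'.mpr ⟨hnd, List.nodup_singleton c,
          by simpa [List.disjoint_singleton] using hc⟩
      · refine List.isChain_append.mpr ⟨hch, List.isChain_singleton c, ?_⟩
        intro a ha b hb
        rw [hlast] at ha
        simp at hb
        cases ha; cases hb; exact hbc

/-- If `x` calls `y` and `y` reaches back to `x`, then there is a recursive
history of `x` containing `y`. -/
lemma rechist_of_cycle {F : Type} {calls : F → Multiset F} {x y : F}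
    (hxy : y ∈ calls x)
    (hyx : Relation.ReflTransGen (fun a b => b ∈ calls a) y x) :
    ∃ L, IsRecHist calls x L ∧ y ∈ L := by
  obtain ⟨p, hne, hhd, hlast, hnd, hch⟩ := exists_nodup_chain hyx
  have hpx : p = p.dropLast ++ [x] := by
    have := List.dropLast_append_getLast hne
    rw [List.getLast?_eq_getLast hne] at hlast
    rw [(Option.some.injEq _ _).mp hlast] at this
    exact this.symm
  set q := p.dropLast with hq
  rcases eq_or_ne q [] with hq0 | hq0
  · -- p = [x], so y = x
    rw [hq0] at hpx; simp at hpx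
    rw [hpx] at hhd
    have hyx' : y = x := by simp at hhd; exact hhd.symm
    subst hyx'
    exact ⟨[y], ⟨by simp, by simp, by simp, by simp [List.Chain'], by
      intro a ha; simp at ha; subst ha; exact hxy⟩, by simp⟩
  · -- L = x :: q
    have hnd' : (q ++ [x]).Nodup := by rw [← hpx]; exact hnd
    have hxq : x ∉ q := by
      rw [List.nodup_append'] at hnd'
      simpa [List.disjoint_singleton] using hnd'.2.2
    have hndq : q.Nodup := (List.nodup_append'.mp hnd').1
    have hhq : q.head? = some y := by
      rw [hpx, List.head?_append] at hhd
      cases hh : q.head? with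
      | none => exact absurd hh (by simpa using hq0)
      | some a =>
        rw [hh] at hhd
        simp at hhd
        rw [hhd]
    have hchp : (q ++ [x]).Chain' (fun a b => b ∈ calls a) := by
      rw [← hpx]; exact hch
    obtain ⟨hchq, -, hlink⟩ := List.isChain_append.mp hchp
    refine ⟨x :: q, ⟨by simp, by simp [hndq, hxq], by simp, ?_, ?_⟩, ?_⟩
    · rw [List.Chain', List.isChain_cons]
      refine ⟨?_, hchq⟩
      intro b hb
      rw [hhq] at hb; cases hb; exact hxy
    · intro a ha
      rw [show x :: q = [x] ++ q from rfl,
        List.getLast?_append_of_ne_nil _ hq0] at ha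
      exact hlink a (ha ▸ rfl) x rfl
    · exact List.mem_cons_of_mem _ (List.mem_of_mem_head? (hhq ▸ rfl))

/-- Rotating a recursive history to start at any of its members gives a
recursive history of that member. -/
lemma rechist_rotate_of_mem {F : Type} {calls : F → Multiset F} {f g : F}
    {l : List F} (h : IsRecHist calls f l) (hg : g ∈ l) :
    ∃ k, IsRecHist calls g (l.rotate k) := by
  obtain ⟨hne, hnd, hhd, hch, hlast⟩ := h
  obtain ⟨s, t, rfl⟩ := List.append_of_mem hg
  refine ⟨s.length, ?_⟩
  have hrot : (s ++ g :: t).rotate s.length = (g :: t) ++ s := by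
    rw [List.rotate_eq_drop_append_take (by simp)]
    simp
  rw [hrot]
  obtain ⟨hchs, hchgt, hlink⟩ := List.isChain_append.mp hch
  rcases eq_or_ne s [] with hs0 | hs0
  · subst hs0
    simp only [List.nil_append] at hhd ⊢
    have hfg : f = g := by simpa using hhd.symm
    subst hfg
    exact ⟨by simp, by simpa using hnd, by simp, by simpa using hch,
      by simpa using hlast⟩
  · have hls : ((g :: t) ++ s).getLast? = s.getLast? := by
      rw [List.getLast?_append_of_ne_nil _ hs0]
    have hgl : (s ++ g :: t).getLast? = (g :: t).getLast? :=
      List.getLast?_append_of_ne_nil _ (by simp)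
    refine ⟨by simp, ?_, by simp, ?_, ?_⟩
    · rw [show (g :: t) ++ s = (s ++ g :: t).rotate s.length from hrot.symm,
        List.nodup_rotate]
      exact hnd
    · refine List.isChain_append.mpr ⟨hchgt, hchs, ?_⟩
      intro a ha b hb
      have hbf : b = f := by
        rw [Option.mem_def] at hb
        rw [List.head?_append, hb] at hhd
        simpa using hhd
      subst hbf
      exact hlast a (by rw [hgl, ← ha])
    · intro a ha
      rw [hls] at ha
      exact hlink a (ha ▸ rfl) g rfl

/-- In a linear recursive program every function has exactly one recursive
history, and recursive histories of mutually reachable functions are cyclic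
rotations of one another. -/
theorem stmt18 {F : Type} [DecidableEq F] (calls : F → Multiset F)
    (h : LinearRec calls) :
    (∀ f, ∃! l, IsRecHist calls f l) ∧
    ∀ f g : F,
      Relation.ReflTransGen (fun a b => b ∈ calls a) f g →
      Relation.ReflTransGen (fun a b => b ∈ calls a) g f →
      ∀ lf lg, IsRecHist calls f lf → IsRecHist calls g lg →
        ∃ k, lg = lf.rotate k := by
  refine ⟨h.1, ?_⟩
  intro f g hfg hgf lf lg hf hg
  -- key: g ∈ lf
  have key : ∀ x, Relation.ReflTransGen (fun a b => b ∈ calls a) f x →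
      Relation.ReflTransGen (fun a b => b ∈ calls a) x f → x ∈ lf := by
    intro x hfx
    induction hfx with
    | refl => exact fun _ => List.mem_of_mem_head? (hf.2.2.1 ▸ rfl)
    | @tail b c hfb hbc ih =>
      intro hcf
      have hb : b ∈ lf := ih (Relation.ReflTransGen.head hbc hcf)
      -- b's recursive history is a rotation of lf
      obtain ⟨k, hkb⟩ := rechist_rotate_of_mem hf hb
      -- a recursive history of b containing c exists
      obtain ⟨L, hL, hcL⟩ := rechist_of_cycle hbc
        (hcf.trans hfb)
      have := (h.1 b).unique hL hkb
      rw [this] at hcL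
      exact (List.mem_rotate).mp hcL
  have hglf : g ∈ lf := key g hfg hgf
  obtain ⟨k, hk⟩ := rechist_rotate_of_mem hf hglf
  exact ⟨k, (h.1 g).unique hg hk⟩
end
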